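/- (Example AND, structural claims.) Let P be the probability distribution on {0,1,2} × {0,1} × {0,1} (values of (S, X₁, X₂)) with P(0,0,0)=1/4, P(1,0,1)=1/4, P(0,1,0)=1/8, P(1,1,0)=1/8, P(2,1,1)=1/4, and all other atoms 0, and let f : {0,1,2} → {0,1} with f(0)=f(1)=0 and f(2)=1. Then: (a) X₁ and X₂ are independent and each is uniform on {0,1}; (b) f(S) = AND(X₁,X₂) holds P-almost surely (i.e. P-probability 1 is carried by triples with f(s) = min(x₁,x₂)); (c) the channels (X₁←f(S)) and (X₂←f(S)), with entries P(Xᵢ=x | f(S)=t), are equal (both have columns (2/3,1/3) at t=0 and (0,1) at t=1); (d) S and X₁ are conditionally independent given f(S), i.e. P(X₁=x₁ | S=s) = P(X₁=x₁ | f(S)=f(s)) for all s with positive probability and all x₁. -/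

import Mathlib

open Finset

/-- A probability distribution on a finite set. -/
def IsDist {S : Type} [Fintype S] (p : S → ℝ) : Prop :=
  (∀ s, 0 ≤ p s) ∧ ∑ s, p s = 1

/-- A channel from `S` to `X`: a column-stochastic matrix. -/
def IsChannel {S X : Type} [Fintype S] [Fintype X] (κ : X → S → ℝ) : Prop :=
  (∀ x s, 0 ≤ κ x s) ∧ ∀ s, ∑ x, κ x s = 1

/-- `κ₁` is a garbling of `κ₂` (the Blackwell order `κ₁ ⪯ κ₂`). -/
def IsGarbling {S X₁ X₂ : Type} [Fintype S] [Fintype X₁] [Fintype X₂]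
    (κ₁ : X₁ → S → ℝ) (κ₂ : X₂ → S → ℝ) : Prop :=
  ∃ lam : X₁ → X₂ → ℝ, IsChannel lam ∧ ∀ x₁ s, κ₁ x₁ s = ∑ x₂, lam x₁ x₂ * κ₂ x₂ s

/-- Optimal expected utility: maximum over decision rules `d : X → A`. -/
noncomputable def optUtility {S X A : Type} [Fintype S] [Fintype X] [Fintype A]
    (p : S → ℝ) (u : A × S → ℝ) (κ : X → S → ℝ) : ℝ :=
  ⨆ d : X → A, ∑ s, ∑ x, p s * κ x s * u (d x, s)

/-- Mutual information between input (with distribution `p`) and output of channel `κ`;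
terms with `κ x s = 0` are taken to be `0`. -/
noncomputable def mutualInfo {S X : Type} [Fintype S] [Fintype X]
    (p : S → ℝ) (κ : X → S → ℝ) : ℝ :=
  ∑ s, ∑ x, if κ x s = 0 then 0 else
    p s * κ x s * Real.log (κ x s / ∑ s', p s' * κ x s')

/-- Channel composition: `(κ·λ) x s = ∑ t, κ x t * λ t s`. -/
def chanComp {S T X : Type} [Fintype S] [Fintype T] [Fintype X]
    (κ : X → T → ℝ) (lam : T → S → ℝ) : X → S → ℝ :=
  fun x s => ∑ t, κ x t * lam t s

/-- Marginal on `S` of a joint distribution on `S × X₁ × X₂`. -/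
noncomputable def margS3 {S X₁ X₂ : Type} [Fintype S] [Fintype X₁] [Fintype X₂]
    (P : S × X₁ × X₂ → ℝ) (s : S) : ℝ := ∑ x₁, ∑ x₂, P (s, x₁, x₂)

/-- The channel `X₁ ← S` of conditional probabilities `P(X₁ = x₁ | S = s)`. -/
noncomputable def chan1of3 {S X₁ X₂ : Type} [Fintype S] [Fintype X₁] [Fintype X₂]
    (P : S × X₁ × X₂ → ℝ) (x₁ : X₁) (s : S) : ℝ :=
  (∑ x₂, P (s, x₁, x₂)) / margS3 P s

/-- The channel `X₂ ← S` of conditional probabilities `P(X₂ = x₂ | S = s)`. -/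
noncomputable def chan2of3 {S X₁ X₂ : Type} [Fintype S] [Fintype X₁] [Fintype X₂]
    (P : S × X₁ × X₂ → ℝ) (x₂ : X₂) (s : S) : ℝ :=
  (∑ x₁, P (s, x₁, x₂)) / margS3 P s

/-- Pushforward of a joint distribution on `S × X₁ × X₂` along `f : S → S'`. -/
noncomputable def push3 {S S' X₁ X₂ : Type} [Fintype S] [Fintype X₁] [Fintype X₂]
    [DecidableEq S'] (f : S → S') (P : S × X₁ × X₂ → ℝ) : S' × X₁ × X₂ → ℝ :=
  fun q => ∑ s ∈ Finset.univ.filter (fun s => f s = q.1), P (s, q.2.1, q.2.2)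

/-- The joint distribution of `(S, X₁, X₂)` from Example 1 (the AND example). -/
noncomputable def Pand : Fin 3 × Fin 2 × Fin 2 → ℝ := fun q =>
  if q = (0, 0, 0) then 1/4
  else if q = (1, 0, 1) then 1/4
  else if q = (0, 1, 0) then 1/8
  else if q = (1, 1, 0) then 1/8
  else if q = (2, 1, 1) then 1/4
  else 0

/-- The coarse-graining `f : {0,1,2} → {0,1}` with `f(0) = f(1) = 0`, `f(2) = 1`. -/
def fAnd : Fin 3 → Fin 2 := fun s => if s = 2 then 1 else 0

/-!
Coarse-graining `S` by `f` turns `Pand` into the law of `(AND(X₁, X₂), X₁, X₂)` with `X₁, X₂`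
independent fair bits: `push3 fAnd Pand` puts mass `1/4` on each triple `(min x₁ x₂, x₁, x₂)`.
Parts (a)–(c) are read off this table, which is symmetric in `x₁, x₂`. Part (d) holds because the
two states `s = 0, 1` merged by `f` induce the same conditional law `(2/3, 1/3)` of `X₁`.
-/

theorem sum_push3 {S S' X₁ X₂ : Type} [Fintype S] [Fintype S'] [Fintype X₁] [Fintype X₂]
    [DecidableEq S'] (f : S → S') (P : S × X₁ × X₂ → ℝ) (x₁ : X₁) (x₂ : X₂) :
    ∑ t, push3 f P (t, x₁, x₂) = ∑ s, P (s, x₁, x₂) :=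
  Finset.sum_fiberwise Finset.univ f fun s => P (s, x₁, x₂)

theorem chan1of3_eq_chan2of3_of_swap {S X : Type} [Fintype S] [Fintype X]
    {P : S × X × X → ℝ} (hP : ∀ s x y, P (s, x, y) = P (s, y, x)) :
    chan1of3 P = chan2of3 P := by
  ext x s
  simp only [chan1of3, chan2of3, hP s x]

theorem push3_fAnd_Pand (t x₁ x₂ : Fin 2) :
    push3 fAnd Pand (t, x₁, x₂) = if t = min x₁ x₂ then 1 / 4 else 0 := by
  fin_cases t <;> fin_cases x₁ <;> fin_cases x₂ <;>
    norm_num [push3, Pand, fAnd, Finset.sum_filter, Fin.sum_univ_succ, Fin.ext_iff,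
      -Fin.val_eq_zero_iff]

theorem Pand_marginal_X₁X₂ (x₁ x₂ : Fin 2) : ∑ s, Pand (s, x₁, x₂) = 1 / 4 := by
  simp [← sum_push3 fAnd, push3_fAnd_Pand]

theorem Pand_marginal_X₁ (x₁ : Fin 2) : ∑ s, ∑ x₂, Pand (s, x₁, x₂) = 1 / 2 := by
  rw [Finset.sum_comm]
  norm_num [Pand_marginal_X₁X₂]

theorem Pand_marginal_X₂ (x₂ : Fin 2) : ∑ s, ∑ x₁, Pand (s, x₁, x₂) = 1 / 2 := by
  rw [Finset.sum_comm]
  norm_num [Pand_marginal_X₁X₂]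

theorem isDist_Pand : IsDist Pand := by
  refine ⟨fun q => ?_, ?_⟩
  · unfold Pand
    split_ifs <;> norm_num
  · rw [Fintype.sum_prod_type, Finset.sum_comm]
    simp [Pand_marginal_X₁X₂]

theorem Pand_eq_zero_of_fAnd_ne_min (q : Fin 3 × Fin 2 × Fin 2)
    (hq : fAnd q.1 ≠ min q.2.1 q.2.2) : Pand q = 0 := by
  obtain ⟨s, x₁, x₂⟩ := q
  fin_cases s <;> fin_cases x₁ <;> fin_cases x₂ <;> simp_all [Pand, fAnd]

theorem chan1of3_push3_fAnd_Pand_eq_chan2of3 :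
    chan1of3 (push3 fAnd Pand) = chan2of3 (push3 fAnd Pand) :=
  chan1of3_eq_chan2of3_of_swap fun s x y => by simp only [push3_fAnd_Pand, min_comm]

theorem chan1of3_Pand_eq_chan1of3_push3 (s : Fin 3) (x₁ : Fin 2) :
    chan1of3 Pand x₁ s = chan1of3 (push3 fAnd Pand) x₁ (fAnd s) := by
  fin_cases s <;> fin_cases x₁ <;>
    norm_num [chan1of3, margS3, push3_fAnd_Pand, Fin.sum_univ_succ, Pand, fAnd, Fin.ext_iff,
      -Fin.val_eq_zero_iff]

/-- Example AND, structural claims: (a) `X₁, X₂` are independent uniform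
binary variables; (b) `f(S) = AND(X₁, X₂)` almost surely; (c) the channels `X₁ ← f(S)` and
`X₂ ← f(S)` are equal, with columns `(2/3, 1/3)` at `t = 0` and `(0, 1)` at `t = 1`;
(d) `S` and `X₁` are conditionally independent given `f(S)`. -/
theorem and_example_structure :
    -- (a) X₁ and X₂ are uniform and independent
    (∀ x₁ : Fin 2, ∑ s : Fin 3, ∑ x₂ : Fin 2, Pand (s, x₁, x₂) = 1/2) ∧
    (∀ x₂ : Fin 2, ∑ s : Fin 3, ∑ x₁ : Fin 2, Pand (s, x₁, x₂) = 1/2) ∧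
    (∀ x₁ x₂ : Fin 2, ∑ s : Fin 3, Pand (s, x₁, x₂) =
      (∑ s : Fin 3, ∑ x₂' : Fin 2, Pand (s, x₁, x₂')) *
        (∑ s : Fin 3, ∑ x₁' : Fin 2, Pand (s, x₁', x₂))) ∧
    -- (b) f(S) = AND(X₁, X₂) almost surely
    (∑ q ∈ Finset.univ.filter
        (fun q : Fin 3 × Fin 2 × Fin 2 => fAnd q.1 = min q.2.1 q.2.2), Pand q = 1) ∧
    -- (c) the channels X₁ ← f(S) and X₂ ← f(S) coincide, with the stated columns
    (∀ x t, chan1of3 (push3 fAnd Pand) x t = chan2of3 (push3 fAnd Pand) x t) ∧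
    chan1of3 (push3 fAnd Pand) 0 0 = 2/3 ∧ chan1of3 (push3 fAnd Pand) 1 0 = 1/3 ∧
    chan1of3 (push3 fAnd Pand) 0 1 = 0 ∧ chan1of3 (push3 fAnd Pand) 1 1 = 1 ∧
    -- (d) S and X₁ are conditionally independent given f(S)
    (∀ s, 0 < margS3 Pand s →
      ∀ x₁, chan1of3 Pand x₁ s = chan1of3 (push3 fAnd Pand) x₁ (fAnd s)) := by
  refine ⟨Pand_marginal_X₁, Pand_marginal_X₂, fun x₁ x₂ => ?_, ?_,
    fun x t => congrFun₂ chan1of3_push3_fAnd_Pand_eq_chan2of3 x t, ?_, ?_, ?_, ?_,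
    fun s _ x₁ => chan1of3_Pand_eq_chan1of3_push3 s x₁⟩
  · rw [Pand_marginal_X₁X₂, Pand_marginal_X₁, Pand_marginal_X₂]
    norm_num
  · rw [Finset.sum_filter_of_ne fun q _ hq =>
      by_contra fun hne => hq (Pand_eq_zero_of_fAnd_ne_min q hne)]
    exact isDist_Pand.2
  all_goals norm_num [chan1of3, margS3, push3_fAnd_Pand, Fin.sum_univ_two]
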